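/- arXiv:1911.01100 — 6 statements merged into one kernel-verified Lean document; each statement's English description precedes it below -/
import Mathlib

section
/- Let K be a field, A a unital associative K-algebra, and r ∈ A. Then the set of all finite sums Σᵢ aᵢ·r·bᵢ, where aᵢ, bᵢ ∈ A satisfy Σᵢ aᵢ·bᵢ = 0, is exactly the K-linear span of the elements x·(r·y − y·r) with x, y ∈ A. Moreover, if (x₁,…,x_M) is a K-basis of A with x_M = 1, then the elements xᵢ·(r·xⱼ − xⱼ·r) for 1 ≤ i ≤ M and 1 ≤ j < M span this set. -/
open scoped BigOperators

/-- In a unital associative `K`-algebra `A` with `r ∈ A`, the set of sums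
`∑ aᵢ * r * bᵢ` with `∑ aᵢ * bᵢ = 0` equals the `K`-span of the elements
`x * (r * y - y * r)`, and is spanned by the `xᵢ * (r * xⱼ - xⱼ * r)` for a basis
`(x₁, …, x_{M+1})` with `x_{M+1} = 1` and `j` ranging over the first `M` indices. -/
theorem stmt0 (K : Type*) [Field K] (A : Type*) [Ring A] [Algebra K A] (r : A)
    (M : ℕ) (bA : Module.Basis (Fin (M + 1)) K A) (hbA : bA (Fin.last M) = 1) :
    {z : A | ∃ (n : ℕ) (a b : Fin n → A),
        (∑ i, a i * b i = 0) ∧ z = ∑ i, a i * r * b i}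
      = ↑(Submodule.span K {z : A | ∃ x y : A, z = x * (r * y - y * r)}) ∧
    {z : A | ∃ (n : ℕ) (a b : Fin n → A),
        (∑ i, a i * b i = 0) ∧ z = ∑ i, a i * r * b i}
      = ↑(Submodule.span K
          (Set.range fun p : Fin (M + 1) × Fin M =>
            bA p.1 * (r * bA p.2.castSucc - bA p.2.castSucc * r))) := by
  set S : Set A := {z : A | ∃ (n : ℕ) (a b : Fin n → A),
        (∑ i, a i * b i = 0) ∧ z = ∑ i, a i * r * b i} with hSdef
  set N : Submodule K A := Submodule.span K {z : A | ∃ x y : A, z = x * (r * y - y * r)}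
    with hNdef
  set T : Submodule K A := Submodule.span K
          (Set.range fun p : Fin (M + 1) × Fin M =>
            bA p.1 * (r * bA p.2.castSucc - bA p.2.castSucc * r)) with hTdef
  -- S is closed under the module operations
  have hzero : (0 : A) ∈ S := ⟨0, 0, 0, by simp, by simp⟩
  have hadd : ∀ x y : A, x ∈ S → y ∈ S → x + y ∈ S := by
    rintro x y ⟨n, a, b, hab, rfl⟩ ⟨m, c, d, hcd, rfl⟩
    refine ⟨n + m, Fin.append a c, Fin.append b d, ?_, ?_⟩
    · rw [Fin.sum_univ_add]
      simp only [Fin.append_left, Fin.append_right, hab, hcd, add_zero]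
    · rw [Fin.sum_univ_add]
      simp only [Fin.append_left, Fin.append_right]
  have hsmul : ∀ (k : K) (x : A), x ∈ S → k • x ∈ S := by
    rintro k x ⟨n, a, b, hab, rfl⟩
    refine ⟨n, fun i => k • a i, b, ?_, ?_⟩
    · simp only [smul_mul_assoc, ← Finset.smul_sum, hab, smul_zero]
    · simp only [smul_mul_assoc, ← Finset.smul_sum]
  set SM : Submodule K A :=
    { carrier := S
      zero_mem' := hzero
      add_mem' := fun hx hy => hadd _ _ hx hy
      smul_mem' := fun k x hx => hsmul k x hx } with hSMdef
  -- first equality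
  have key1 : S = ↑N := by
    apply Set.Subset.antisymm
    · rintro z ⟨n, a, b, hab, rfl⟩
      have hz : ∑ i, a i * r * b i = ∑ i, a i * (r * b i - b i * r) := by
        simp only [mul_sub, ← mul_assoc]
        rw [Finset.sum_sub_distrib, ← Finset.sum_mul, hab, zero_mul, sub_zero]
      rw [hz]
      exact Submodule.sum_mem _ fun i _ => Submodule.subset_span ⟨a i, b i, rfl⟩
    · have hle : N ≤ SM := by
        rw [hNdef, Submodule.span_le]
        rintro z ⟨x, y, rfl⟩
        refine ⟨2, ![x, -(x * y)], ![y, 1], ?_, ?_⟩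
        · simp [Fin.sum_univ_two]
        · simp only [Fin.sum_univ_two, Matrix.cons_val_zero, Matrix.cons_val_one,
            Matrix.head_cons]
          noncomm_ring
      exact fun z hz => hle hz
  -- second: N = T as submodules
  have step1 : ∀ (i : Fin (M + 1)) (y : A), bA i * (r * y - y * r) ∈ T := by
    intro i y
    rw [show y = ∑ j, bA.repr y j • bA j from (bA.sum_repr y).symm]
    have hrw : bA i * (r * (∑ j, bA.repr y j • bA j) - (∑ j, bA.repr y j • bA j) * r)
        = ∑ j, bA.repr y j • (bA i * (r * bA j - bA j * r)) := by
      rw [Finset.mul_sum, Finset.sum_mul, ← Finset.sum_sub_distrib, Finset.mul_sum]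
      refine Finset.sum_congr rfl fun j _ => ?_
      simp only [mul_smul_comm, smul_mul_assoc, mul_sub, smul_sub]
    rw [hrw]
    refine Submodule.sum_mem _ fun j _ => Submodule.smul_mem _ _ ?_
    rcases Fin.eq_castSucc_or_eq_last j with ⟨k, rfl⟩ | rfl
    · exact Submodule.subset_span ⟨(i, k), rfl⟩
    · rw [hbA]
      simp
  have step2 : ∀ x y : A, x * (r * y - y * r) ∈ T := by
    intro x y
    rw [show x = ∑ i, bA.repr x i • bA i from (bA.sum_repr x).symm]
    rw [Finset.sum_mul]
    refine Submodule.sum_mem _ fun i _ => ?_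
    rw [smul_mul_assoc]
    exact Submodule.smul_mem _ _ (step1 i y)
  have key2 : N = T := by
    apply le_antisymm
    · rw [hNdef, Submodule.span_le]
      rintro z ⟨x, y, rfl⟩
      exact step2 x y
    · rw [hTdef, Submodule.span_le]
      rintro z ⟨p, rfl⟩
      exact Submodule.subset_span ⟨bA p.1, bA p.2.castSucc, rfl⟩
  exact ⟨key1, by rw [key1, key2]⟩
end

section
/- Let R₁, R₂ ∈ M_N(ℂ) and set r := E₁₁⊗R₁ + E₂₂⊗R₂ ∈ M₂(ℂ)⊗M_N(ℂ), where E₁₁, E₂₂ are the diagonal elementary 2×2 matrices. Then the set of all finite sums Σᵢ (xᵢ⊗1_N)·r·(yᵢ⊗1_N), where xᵢ, yᵢ ∈ M₂(ℂ) satisfy Σᵢ xᵢ·yᵢ = 0, is exactly the set { α ⊗ (R₁ − R₂) : α ∈ M₂(ℂ) }. -/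
open Matrix
open scoped Kronecker BigOperators

private lemma sum_kron_left {ι : Type*} (s : Finset ι) {N : ℕ}
    (f : ι → Matrix (Fin 2) (Fin 2) ℂ) (B : Matrix (Fin N) (Fin N) ℂ) :
    (∑ i ∈ s, f i) ⊗ₖ B = ∑ i ∈ s, (f i ⊗ₖ B) := by
  ext ⟨a,b⟩ ⟨c,d⟩
  simp [Matrix.sum_apply, Finset.sum_mul]

private lemma kron_sub {N : ℕ} (A : Matrix (Fin 2) (Fin 2) ℂ)
    (B C : Matrix (Fin N) (Fin N) ℂ) :
    A ⊗ₖ (B - C) = A ⊗ₖ B - A ⊗ₖ C := by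
  ext ⟨a,b⟩ ⟨c,d⟩; simp [mul_sub]

private lemma neg_kron {N : ℕ} (A : Matrix (Fin 2) (Fin 2) ℂ)
    (B : Matrix (Fin N) (Fin N) ℂ) :
    (-A) ⊗ₖ B = -(A ⊗ₖ B) := by
  ext ⟨a,b⟩ ⟨c,d⟩; simp

private lemma E_sum :
    (Matrix.single (0:Fin 2) (0:Fin 2) (1:ℂ)) + Matrix.single 1 1 1 = 1 := by
  ext i j; fin_cases i <;> fin_cases j <;> simp [Matrix.single, Matrix.one_apply]

/-- for `r = E₁₁⊗R₁ + E₂₂⊗R₂`, the set of sums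
`∑ (xᵢ⊗1)·r·(yᵢ⊗1)` with `xᵢ, yᵢ ∈ M₂(ℂ)` and `∑ xᵢyᵢ = 0` is exactly
`{α ⊗ (R₁ − R₂) : α ∈ M₂(ℂ)}`. -/
theorem stmt1 (N : ℕ) (R1 R2 : Matrix (Fin N) (Fin N) ℂ) :
    {z : Matrix (Fin 2 × Fin N) (Fin 2 × Fin N) ℂ |
      ∃ (n : ℕ) (x y : Fin n → Matrix (Fin 2) (Fin 2) ℂ),
        (∑ i, x i * y i = 0) ∧
        z = ∑ i, (x i ⊗ₖ (1 : Matrix (Fin N) (Fin N) ℂ)) *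
              ((Matrix.single (0 : Fin 2) (0 : Fin 2) (1 : ℂ)) ⊗ₖ R1 +
               (Matrix.single (1 : Fin 2) (1 : Fin 2) (1 : ℂ)) ⊗ₖ R2) *
              (y i ⊗ₖ (1 : Matrix (Fin N) (Fin N) ℂ))}
      = {z : Matrix (Fin 2 × Fin N) (Fin 2 × Fin N) ℂ |
          ∃ α : Matrix (Fin 2) (Fin 2) ℂ, z = α ⊗ₖ (R1 - R2)} := by
  set E1 : Matrix (Fin 2) (Fin 2) ℂ := Matrix.single 0 0 1 with hE1
  set E2 : Matrix (Fin 2) (Fin 2) ℂ := Matrix.single 1 1 1 with hE2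
  have key : ∀ (n : ℕ) (x y : Fin n → Matrix (Fin 2) (Fin 2) ℂ),
      (∑ i, (x i ⊗ₖ (1 : Matrix (Fin N) (Fin N) ℂ)) * (E1 ⊗ₖ R1 + E2 ⊗ₖ R2) *
        (y i ⊗ₖ (1 : Matrix (Fin N) (Fin N) ℂ)))
      = (∑ i, x i * E1 * y i) ⊗ₖ R1 + (∑ i, x i * E2 * y i) ⊗ₖ R2 := by
    intro n x y
    rw [sum_kron_left, sum_kron_left, ← Finset.sum_add_distrib]
    refine Finset.sum_congr rfl fun i _ => ?_
    simp only [Matrix.mul_add, Matrix.add_mul, ← Matrix.mul_kronecker_mul,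
      Matrix.one_mul, Matrix.mul_one]
  ext z
  simp only [Set.mem_setOf_eq]
  constructor
  · rintro ⟨n, x, y, h0, rfl⟩
    refine ⟨∑ i, x i * E1 * y i, ?_⟩
    rw [key]
    have h2 : (∑ i, x i * E2 * y i) = -(∑ i, x i * E1 * y i) := by
      have : (∑ i, x i * E1 * y i) + (∑ i, x i * E2 * y i) = 0 := by
        rw [← Finset.sum_add_distrib]
        calc (∑ i, (x i * E1 * y i + x i * E2 * y i))
            = ∑ i, x i * y i := by
              refine Finset.sum_congr rfl fun i _ => ?_
              rw [← Matrix.add_mul, ← Matrix.mul_add, hE1, hE2, E_sum, Matrix.mul_one]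
          _ = 0 := h0
      linear_combination (norm := module) this
    rw [h2, neg_kron, kron_sub]
    abel
  · rintro ⟨α, rfl⟩
    refine ⟨4, ![α, α * Matrix.single 1 0 1, α, -(α * Matrix.single 0 1 1)],
      ![E1, Matrix.single 0 1 1, -E2, Matrix.single 1 0 1], ?_, ?_⟩
    · show α * E1 + (α * Matrix.single 1 0 1 * Matrix.single 0 1 1 +
        (α * -E2 + (-(α * Matrix.single 0 1 1) * Matrix.single 1 0 1 + 0))) = 0
      ext i j
      fin_cases i <;> fin_cases j <;>
        simp [hE1, hE2, Matrix.mul_apply, Matrix.single, Fin.sum_univ_two]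
    · rw [key]
      have hA : (∑ i : Fin 4, ![α, α * Matrix.single 1 0 1, α, -(α * Matrix.single 0 1 1)] i
            * E1 * ![E1, Matrix.single 0 1 1, -E2, Matrix.single 1 0 1] i) = α := by
        ext i j
        fin_cases i <;> fin_cases j <;>
          simp [Fin.sum_univ_four, hE1, hE2, Matrix.mul_apply, Matrix.single,
            Fin.sum_univ_two]
      have hB : (∑ i : Fin 4, ![α, α * Matrix.single 1 0 1, α, -(α * Matrix.single 0 1 1)] i
            * E2 * ![E1, Matrix.single 0 1 1, -E2, Matrix.single 1 0 1] i) = -α := by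
        ext i j
        fin_cases i <;> fin_cases j <;>
          simp [Fin.sum_univ_four, hE1, hE2, Matrix.mul_apply, Matrix.single,
            Fin.sum_univ_two]
      rw [hA, hB, neg_kron, kron_sub]
      abel
end

section
/- Let V be a vector space over a field K, D ∈ End(V), and let A₁, A₂ be subalgebras of a unital subalgebra A₃ of End(V) such that every element of A₁ commutes with every element of A₂, and such that a₁·[D,a₂] = [D,a₂]·a₁ for all a₁ ∈ A₁, a₂ ∈ A₂ (where [X,Y] := XY − YX). Define the junk space J(A₃) := { Σⱼ [D,xⱼ]·[D,yⱼ] : xⱼ, yⱼ ∈ A₃ finite families with Σⱼ xⱼ·[D,yⱼ] = 0 }. Then for any finite families a₁ⁱ, b₁ⁱ ∈ A₁ and a₂ʲ, b₂ʲ ∈ A₂, setting ω₁ := Σᵢ a₁ⁱ·[D,b₁ⁱ] and ω₂ := Σⱼ a₂ʲ·[D,b₂ʲ], one has ω₁·ω₂ + ω₂·ω₁ ∈ J(A₃). -/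
open scoped BigOperators

/-- If `c` commutes with `q` and with `[D,q]`, then `q` commutes with `[D,c]`. -/
private lemma swap_comm {A : Type*} [Ring A] {D c q : A}
    (h1 : c * (D * q - q * D) = (D * q - q * D) * c) (h2 : c * q = q * c) :
    q * (D * c - c * D) = (D * c - c * D) * q := by
  linear_combination (norm := noncomm_ring) h1 + h2 * D - D * h2

private lemma key1 {A : Type*} [Ring A] (D p q r s : A)
    (hr : r * (D * s - s * D) = (D * s - s * D) * r)
    (hrs : r * s = s * r) :
    (-(p * q)) * (D * (r * s) - (r * s) * D) + (p * q * s) * (D * r - r * D)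
      + (p * q * r) * (D * s - s * D) = 0 := by
  linear_combination (norm := noncomm_ring) p * q * hr - p * q * D * hrs + p * q * hrs * D

private lemma key2 {A : Type*} [Ring A] (D p q r s : A)
    (hpq : p * q = q * p)
    (hp : p * (D * s - s * D) = (D * s - s * D) * p)
    (hq : q * (D * r - r * D) = (D * r - r * D) * q)
    (hs : s * (D * r - r * D) = (D * r - r * D) * s) :
    (D * (-(p * q)) - (-(p * q)) * D) * (D * (r * s) - (r * s) * D)
      + (D * (p * q * s) - (p * q * s) * D) * (D * r - r * D)
      + (D * (p * q * r) - (p * q * r) * D) * (D * s - s * D)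
    = (p * (D * r - r * D)) * (q * (D * s - s * D))
      + (q * (D * s - s * D)) * (p * (D * r - r * D)) := by
  linear_combination (norm := noncomm_ring)
    (D * (p * q) - p * q * D) * hs + p * hq * (D * s - s * D) + q * hp * (D * r - r * D)
      + hpq * ((D * s - s * D) * (D * r - r * D))

/-- if `A₁, A₂` are subalgebras of `A₃ ⊆ End(V)` that commute with each
other and satisfy `a₁[D,a₂] = [D,a₂]a₁`, then the 1-forms `ω₁ = ∑ a₁ⁱ[D,b₁ⁱ]` and
`ω₂ = ∑ a₂ʲ[D,b₂ʲ]` anticommute modulo the junk 2-forms of `A₃`. -/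
theorem stmt2 (K V : Type*) [Field K] [AddCommGroup V] [Module K V]
    (D : Module.End K V) (A1 A2 A3 : Subalgebra K (Module.End K V))
    (h13 : A1 ≤ A3) (h23 : A2 ≤ A3)
    (hcomm : ∀ a1 ∈ A1, ∀ a2 ∈ A2, a1 * a2 = a2 * a1)
    (hDcomm : ∀ a1 ∈ A1, ∀ a2 ∈ A2, a1 * (D * a2 - a2 * D) = (D * a2 - a2 * D) * a1)
    (n m : ℕ) (a1 b1 : Fin n → Module.End K V) (a2 b2 : Fin m → Module.End K V)
    (ha1 : ∀ i, a1 i ∈ A1) (hb1 : ∀ i, b1 i ∈ A1)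
    (ha2 : ∀ j, a2 j ∈ A2) (hb2 : ∀ j, b2 j ∈ A2) :
    (∑ i, a1 i * (D * b1 i - b1 i * D)) * (∑ j, a2 j * (D * b2 j - b2 j * D))
      + (∑ j, a2 j * (D * b2 j - b2 j * D)) * (∑ i, a1 i * (D * b1 i - b1 i * D))
    ∈ {z : Module.End K V | ∃ (k : ℕ) (x y : Fin k → Module.End K V),
        (∀ j, x j ∈ A3) ∧ (∀ j, y j ∈ A3) ∧
        (∑ j, x j * (D * y j - y j * D) = 0) ∧
        z = ∑ j, (D * x j - x j * D) * (D * y j - y j * D)} := by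
  classical
  -- derived commutation: A₂ commutes with [D, A₁]
  have hD21 : ∀ a ∈ A2, ∀ c ∈ A1, a * (D * c - c * D) = (D * c - c * D) * a :=
    fun a ha c hc => swap_comm (hDcomm c hc a ha) (hcomm c hc a ha)
  set X : Fin n × Fin m × Fin 3 → Module.End K V := fun p =>
    ![-(a1 p.1 * a2 p.2.1), a1 p.1 * a2 p.2.1 * b2 p.2.1, a1 p.1 * a2 p.2.1 * b1 p.1] p.2.2
    with hXdef
  set Y : Fin n × Fin m × Fin 3 → Module.End K V := fun p =>
    ![b1 p.1 * b2 p.2.1, b1 p.1, b2 p.2.1] p.2.2 with hYdef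
  set e : Fin (Fintype.card (Fin n × Fin m × Fin 3)) ≃ Fin n × Fin m × Fin 3 :=
    (Fintype.equivFin _).symm with hedef
  refine ⟨Fintype.card (Fin n × Fin m × Fin 3), fun t => X (e t), fun t => Y (e t),
    ?_, ?_, ?_, ?_⟩
  · have hXmem : ∀ p : Fin n × Fin m × Fin 3, X p ∈ A3 := by
      rintro ⟨i, j, s⟩
      fin_cases s <;> simp only [hXdef, Matrix.cons_val_zero, Matrix.cons_val_one,
        Matrix.head_cons, Matrix.cons_val_two, Matrix.tail_cons]
      · exact A3.neg_mem (A3.mul_mem (h13 (ha1 i)) (h23 (ha2 j)))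
      · exact A3.mul_mem (A3.mul_mem (h13 (ha1 i)) (h23 (ha2 j))) (h23 (hb2 j))
      · exact A3.mul_mem (A3.mul_mem (h13 (ha1 i)) (h23 (ha2 j))) (h13 (hb1 i))
    exact fun t => hXmem (e t)
  · have hYmem : ∀ p : Fin n × Fin m × Fin 3, Y p ∈ A3 := by
      rintro ⟨i, j, s⟩
      fin_cases s <;> simp only [hYdef, Matrix.cons_val_zero, Matrix.cons_val_one,
        Matrix.head_cons, Matrix.cons_val_two, Matrix.tail_cons]
      · exact A3.mul_mem (h13 (hb1 i)) (h23 (hb2 j))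
      · exact h13 (hb1 i)
      · exact h23 (hb2 j)
    exact fun t => hYmem (e t)
  · rw [Equiv.sum_comp e (fun p => X p * (D * Y p - Y p * D))]
    rw [Fintype.sum_prod_type]
    refine Finset.sum_eq_zero fun i _ => ?_
    rw [Fintype.sum_prod_type]
    refine Finset.sum_eq_zero fun j _ => ?_
    rw [Fin.sum_univ_three]
    simp only [hXdef, hYdef, Matrix.cons_val_zero, Matrix.cons_val_one,
      Matrix.head_cons, Matrix.cons_val_two, Matrix.tail_cons]
    exact key1 D (a1 i) (a2 j) (b1 i) (b2 j)
      (hDcomm (b1 i) (hb1 i) (b2 j) (hb2 j))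
      (hcomm (b1 i) (hb1 i) (b2 j) (hb2 j))
  · rw [Equiv.sum_comp e (fun p => (D * X p - X p * D) * (D * Y p - Y p * D))]
    have hR : ∑ p : Fin n × Fin m × Fin 3, (D * X p - X p * D) * (D * Y p - Y p * D)
        = ∑ i, ∑ j, ∑ s : Fin 3,
            (D * X (i, j, s) - X (i, j, s) * D) * (D * Y (i, j, s) - Y (i, j, s) * D) := by
      rw [Fintype.sum_prod_type]
      exact Finset.sum_congr rfl fun i _ => Fintype.sum_prod_type _
    rw [hR, Finset.sum_mul_sum]
    rw [show (∑ j, a2 j * (D * b2 j - b2 j * D)) * (∑ i, a1 i * (D * b1 i - b1 i * D))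
        = ∑ i, ∑ j, (a2 j * (D * b2 j - b2 j * D)) * (a1 i * (D * b1 i - b1 i * D)) by
      rw [Finset.sum_mul_sum]; exact Finset.sum_comm]
    rw [← Finset.sum_add_distrib]
    refine Finset.sum_congr rfl fun i _ => ?_
    rw [← Finset.sum_add_distrib]
    refine Finset.sum_congr rfl fun j _ => ?_
    rw [Fin.sum_univ_three]
    simp only [hXdef, hYdef, Matrix.cons_val_zero, Matrix.cons_val_one,
      Matrix.head_cons, Matrix.cons_val_two, Matrix.tail_cons]
    exact (key2 D (a1 i) (a2 j) (b1 i) (b2 j)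
      (hcomm (a1 i) (ha1 i) (a2 j) (ha2 j))
      (hDcomm (a1 i) (ha1 i) (b2 j) (hb2 j))
      (hD21 (a2 j) (ha2 j) (b1 i) (hb1 i))
      (hD21 (b2 j) (hb2 j) (b1 i) (hb1 i))).symm
end

section
/- The π(A_F^ext)-bimodule of End(K_F) generated by the commutators [D_F, π(b)], b ∈ A_F^ext (i.e. the smallest real subspace containing all π(a)·[D_F,π(b)]·π(c) with a, b, c ∈ A_F^ext), is the internal direct sum Ω¹_F ⊕ Ω¹_σ. -/
open Matrix Complex
open scoped BigOperators

noncomputable section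

/-- Index set of the internal space `K₀ = (ℂ² ⊕ ℂ²⊗ℂ³) ⊗ ℂ^N`. -/
abbrev I0 (N : ℕ) := (Fin 2 ⊕ Fin 2 × Fin 3) × Fin N

/-- Index set of `K_F = K₀ ⊗ ℂ⁴`, the `Fin 4` factor labelling the sectors
`R = 0, L = 1, R̄ = 2, L̄ = 3`. -/
abbrev IF (N : ℕ) := Fin 4 × I0 N

/-- Endomorphisms of `K₀`. -/
abbrev Op0 (N : ℕ) := Matrix (I0 N) (I0 N) ℂ

/-- Endomorphisms of `K_F`. -/
abbrev OpF (N : ℕ) := Matrix (IF N) (IF N) ℂ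

/-- Build an operator on `K_F` from a `4×4` matrix of blocks in `End(K₀)`. -/
def mk4 {N : ℕ} (B : Matrix (Fin 4) (Fin 4) (Op0 N)) : OpF N :=
  fun p q => B p.1 q.1 p.2 q.2

/-- Build an operator on `K₀` from a lepton block and a quark block (each a matrix of
generation matrices). -/
def op0 {N : ℕ} (fl : Fin 2 → Fin 2 → Matrix (Fin N) (Fin N) ℂ)
    (fq : Fin 2 × Fin 3 → Fin 2 × Fin 3 → Matrix (Fin N) (Fin N) ℂ) : Op0 N :=
  fun p q =>
    match p.1, q.1 with
    | Sum.inl i, Sum.inl i' => fl i i' p.2 q.2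
    | Sum.inr j, Sum.inr j' => fq j j' p.2 q.2
    | _, _ => 0

/-- `q` is a quaternion, i.e. of the form `[[α, β], [−β̄, ᾱ]]`. -/
def IsQuat (q : Matrix (Fin 2) (Fin 2) ℂ) : Prop :=
  q 1 1 = star (q 0 0) ∧ q 1 0 = -star (q 0 1)

/-- `ã = (a ⊕ a⊗1₃)⊗1_N` for `a ∈ M₂(ℂ)`. -/
def tild {N : ℕ} (a : Matrix (Fin 2) (Fin 2) ℂ) : Op0 N :=
  op0 (fun i i' => a i i' • 1)
    (fun j j' => if j.2 = j'.2 then a j.1 j'.1 • 1 else 0)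

/-- `Y₀ = diag(Y_ν, Y_e) ⊕ diag(1₃⊗Y_u, 1₃⊗Y_d)`. -/
def Y0 {N : ℕ} (Yν Ye Yu Yd : Matrix (Fin N) (Fin N) ℂ) : Op0 N :=
  op0 (fun i i' => if i = i' then (if i = 0 then Yν else Ye) else 0)
    (fun j j' => if j = j' then (if j.1 = 0 then Yu else Yd) else 0)

/-- `M₀ = p_ν ⊗ m₀ ⊕ 0`. -/
def M0 {N : ℕ} (m0 : Matrix (Fin N) (Fin N) ℂ) : Op0 N :=
  op0 (fun i i' => if i = 0 ∧ i' = 0 then m0 else 0) (fun _ _ => 0)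

/-- The finite Dirac operator `D_F`. -/
def DF {N : ℕ} (s : ℂ) (Yν Ye Yu Yd m0 : Matrix (Fin N) (Fin N) ℂ) : OpF N :=
  mk4 !![0, -(Y0 Yν Ye Yu Yd)ᴴ, s • (M0 m0)ᴴ, 0;
         Y0 Yν Ye Yu Yd, 0, 0, 0;
         M0 m0, 0, 0, -(Y0 Yν Ye Yu Yd)ᵀ;
         0, 0, (Y0 Yν Ye Yu Yd).map (starRingEnd ℂ), 0]

/-- The bimodule `Ω¹_F` of standard-model finite 1-forms. -/
def Omega1F {N : ℕ} (Yν Ye Yu Yd : Matrix (Fin N) (Fin N) ℂ) : Set (OpF N) :=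
  {w | ∃ q1 q2 : Matrix (Fin 2) (Fin 2) ℂ, IsQuat q1 ∧ IsQuat q2 ∧
    w = mk4 !![0, (Y0 Yν Ye Yu Yd)ᴴ * tild q1, 0, 0;
               tild q2 * Y0 Yν Ye Yu Yd, 0, 0, 0;
               0, 0, 0, 0;
               0, 0, 0, 0]}

/-- The bimodule `Ω¹_σ`. -/
def Omega1σ {N : ℕ} (m0 : Matrix (Fin N) (Fin N) ℂ) : Set (OpF N) :=
  {w | ∃ z1 z2 : ℂ,
    w = mk4 !![0, 0, z2 • (M0 m0)ᴴ, 0;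
               0, 0, 0, 0;
               z1 • M0 m0, 0, 0, 0;
               0, 0, 0, 0]}

/-- `q_λ = diag(λ, λ̄)`. -/
def qmat (l : ℂ) : Matrix (Fin 2) (Fin 2) ℂ := !![l, 0; 0, star l]

/-- Block acting as `μ·1` on the lepton sector and as `1₂⊗m⊗1_N` on the quark sector. -/
def lsqc {N : ℕ} (μ : ℂ) (m : Matrix (Fin 3) (Fin 3) ℂ) : Op0 N :=
  op0 (fun i i' => if i = i' then μ • 1 else 0)
    (fun j j' => if j.1 = j'.1 then m j.2 j'.2 • 1 else 0)

/-- The extended representation `π(λ,q,m,μ)` of `A_F^ext = ℂ⊕ℍ⊕M₃(ℂ)⊕ℂ` on `K_F`. -/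
def rep {N : ℕ} (l : ℂ) (q : Matrix (Fin 2) (Fin 2) ℂ)
    (m : Matrix (Fin 3) (Fin 3) ℂ) (μ : ℂ) : OpF N :=
  mk4 !![tild (qmat l), 0, 0, 0;
         0, tild q, 0, 0;
         0, 0, lsqc μ m, 0;
         0, 0, 0, lsqc μ m]

/-- The image of the opposite representation of `A_F^ext` (the algebra `B`). -/
def Bop {N : ℕ} (l μ : ℂ) (q : Matrix (Fin 2) (Fin 2) ℂ)
    (m : Matrix (Fin 3) (Fin 3) ℂ) : OpF N :=
  mk4 !![lsqc μ m, 0, 0, 0;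
         0, lsqc μ m, 0, 0;
         0, 0, tild (qmat l), 0;
         0, 0, 0, tild q]


section Aux
variable {N : ℕ}

lemma mk4_apply (B : Matrix (Fin 4) (Fin 4) (Op0 N)) (p q : IF N) :
    mk4 B p q = B p.1 q.1 p.2 q.2 := rfl

lemma mk4_mul (B C : Matrix (Fin 4) (Fin 4) (Op0 N)) : mk4 B * mk4 C = mk4 (B * C) := by
  ext p q
  simp [mk4, Matrix.mul_apply, Matrix.sum_apply, Fintype.sum_prod_type]

lemma mk4_sub (B C : Matrix (Fin 4) (Fin 4) (Op0 N)) : mk4 B - mk4 C = mk4 (B - C) := rfl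

lemma op0_mul (fl gl : Fin 2 → Fin 2 → (Matrix (Fin N) (Fin N) ℂ))
    (fq gq : Fin 2 × Fin 3 → Fin 2 × Fin 3 → (Matrix (Fin N) (Fin N) ℂ)) :
    op0 fl fq * op0 gl gq = op0 (fun i i' => (Matrix.of fl * Matrix.of gl) i i') (fun j j' => (Matrix.of fq * Matrix.of gq) j j') := by
  ext ⟨p1, p2⟩ ⟨q1, q2⟩
  cases p1 <;> cases q1 <;>
    simp only [op0, Matrix.mul_apply, Matrix.of_apply, Matrix.sum_apply, Fintype.sum_prod_type,
      Fintype.sum_sum_type, zero_mul, mul_zero, Finset.sum_const_zero, add_zero, zero_add]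


lemma op0_conjT (fl fq) :
    (op0 (N := N) fl fq)ᴴ = op0 (fun i i' => (fl i' i)ᴴ) (fun j j' => (fq j' j)ᴴ) := by
  ext ⟨p1, p2⟩ ⟨q1, q2⟩
  cases p1 <;> cases q1 <;> simp [op0, Matrix.conjTranspose_apply]

lemma op0_transpose (fl fq) :
    (op0 (N := N) fl fq)ᵀ = op0 (fun i i' => (fl i' i)ᵀ) (fun j j' => (fq j' j)ᵀ) := by
  ext ⟨p1, p2⟩ ⟨q1, q2⟩
  cases p1 <;> cases q1 <;> simp [op0, Matrix.transpose_apply]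

lemma op0_map (fl fq) :
    (op0 (N := N) fl fq).map (starRingEnd ℂ)
      = op0 (fun i i' => (fl i i').map (starRingEnd ℂ)) (fun j j' => (fq j j').map (starRingEnd ℂ)) := by
  ext ⟨p1, p2⟩ ⟨q1, q2⟩
  cases p1 <;> cases q1 <;> simp [op0, Matrix.map_apply]

lemma op0_ext {fl gl fq gq} (h1 : ∀ i i', fl i i' = gl i i') (h2 : ∀ j j', fq j j' = gq j j') :
    op0 (N := N) fl fq = op0 gl gq := by
  ext ⟨p1, p2⟩ ⟨q1, q2⟩
  cases p1 <;> cases q1 <;> simp [op0, h1, h2]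

lemma tild_mul (a b : Matrix (Fin 2) (Fin 2) ℂ) :
    tild (N := N) a * tild b = tild (a * b) := by
  rw [tild, tild, op0_mul, tild]
  refine op0_ext (fun i i' => ?_) (fun j j' => ?_)
  · simp [Matrix.mul_apply, Finset.sum_smul, smul_smul, add_smul, mul_comm]
  · simp only [Matrix.mul_apply, Fintype.sum_prod_type]
    by_cases h : j.2 = j'.2 <;>
      simp [h, Matrix.mul_apply, Finset.sum_smul, smul_smul, Finset.sum_ite_eq,
        Finset.sum_ite_eq', add_smul, mul_comm]

lemma op0_smul (c : ℂ) (fl fq) :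
    c • op0 (N := N) fl fq = op0 (fun i i' => c • fl i i') (fun j j' => c • fq j j') := by
  ext ⟨p1, p2⟩ ⟨q1, q2⟩
  cases p1 <;> cases q1 <;> simp [op0]

lemma tild_conjT (a : Matrix (Fin 2) (Fin 2) ℂ) : (tild (N := N) a)ᴴ = tild aᴴ := by
  rw [tild, op0_conjT, tild]
  refine op0_ext (fun i i' => ?_) (fun j j' => ?_)
  · simp [Matrix.conjTranspose_apply]
  · by_cases h : j.2 = j'.2 <;> simp [h, eq_comm, Matrix.conjTranspose_apply]

lemma qmat_conjT (l : ℂ) : (qmat l)ᴴ = qmat (star l) := by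
  ext i j; fin_cases i <;> fin_cases j <;> simp [qmat]

variable (Yν Ye Yu Yd m0 : Matrix (Fin N) (Fin N) ℂ)

lemma comm_Y (l : ℂ) :
    tild (qmat l) * Y0 Yν Ye Yu Yd = Y0 Yν Ye Yu Yd * tild (qmat l) := by
  rw [tild, Y0, op0_mul, op0_mul]
  refine op0_ext (fun i i' => ?_) (fun j j' => ?_)
  · fin_cases i <;> fin_cases i' <;>
      simp [Matrix.mul_apply, Fin.sum_univ_two, qmat]
  · obtain ⟨j1, j2⟩ := j; obtain ⟨j1', j2'⟩ := j'
    fin_cases j1 <;> fin_cases j1' <;>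
      simp [Matrix.mul_apply, Fintype.sum_prod_type, Fin.sum_univ_two, Fin.sum_univ_three,
        qmat, Prod.ext_iff] <;>
      (fin_cases j2 <;> fin_cases j2' <;> simp)

lemma comm_YH (l : ℂ) :
    tild (qmat l) * (Y0 Yν Ye Yu Yd)ᴴ = (Y0 Yν Ye Yu Yd)ᴴ * tild (qmat l) := by
  have h := congrArg Matrix.conjTranspose (comm_Y (N := N) Yν Ye Yu Yd (star l))
  simpa [Matrix.conjTranspose_mul, tild_conjT, qmat_conjT] using h.symm

lemma comm_Yt (μ : ℂ) (m : Matrix (Fin 3) (Fin 3) ℂ) :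
    lsqc μ m * (Y0 Yν Ye Yu Yd)ᵀ = (Y0 Yν Ye Yu Yd)ᵀ * lsqc μ m := by
  rw [lsqc, Y0, op0_transpose, op0_mul, op0_mul]
  refine op0_ext (fun i i' => ?_) (fun j j' => ?_)
  · fin_cases i <;> fin_cases i' <;>
      simp [Matrix.mul_apply, Fin.sum_univ_two, Matrix.smul_mul, Matrix.mul_smul]
  · obtain ⟨j1, j2⟩ := j; obtain ⟨j1', j2'⟩ := j'
    fin_cases j1 <;> fin_cases j1' <;>
      simp [Matrix.mul_apply, Fintype.sum_prod_type, Fin.sum_univ_two, Fin.sum_univ_three,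
        Prod.ext_iff, Matrix.smul_mul, Matrix.mul_smul] <;>
      (fin_cases j2 <;> fin_cases j2' <;> simp)

lemma comm_Ystar (μ : ℂ) (m : Matrix (Fin 3) (Fin 3) ℂ) :
    (Y0 Yν Ye Yu Yd).map (starRingEnd ℂ) * lsqc μ m
      = lsqc μ m * (Y0 Yν Ye Yu Yd).map (starRingEnd ℂ) := by
  rw [lsqc, Y0, op0_map, op0_mul, op0_mul]
  refine op0_ext (fun i i' => ?_) (fun j j' => ?_)
  · fin_cases i <;> fin_cases i' <;>
      simp [Matrix.mul_apply, Fin.sum_univ_two, Matrix.smul_mul, Matrix.mul_smul,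
        apply_ite (Matrix.map · (starRingEnd ℂ))]
  · obtain ⟨j1, j2⟩ := j; obtain ⟨j1', j2'⟩ := j'
    fin_cases j1 <;> fin_cases j1' <;>
      simp [Matrix.mul_apply, Fintype.sum_prod_type, Fin.sum_univ_two, Fin.sum_univ_three,
        Prod.ext_iff, Matrix.smul_mul, Matrix.mul_smul,
        apply_ite (Matrix.map · (starRingEnd ℂ))] <;>
      (fin_cases j2 <;> fin_cases j2' <;> simp)

lemma tild_MH (l : ℂ) :
    tild (qmat l) * (M0 m0)ᴴ = l • (M0 m0)ᴴ := by
  rw [tild, M0, op0_conjT, op0_mul, op0_smul]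
  refine op0_ext (fun i i' => ?_) (fun j j' => ?_)
  · fin_cases i <;> fin_cases i' <;>
      simp [Matrix.mul_apply, Fin.sum_univ_two, qmat, apply_ite Matrix.conjTranspose]
  · simp [Matrix.mul_apply, Fintype.sum_prod_type]

lemma MH_lsqc (μ : ℂ) (m : Matrix (Fin 3) (Fin 3) ℂ) :
    (M0 m0)ᴴ * lsqc μ m = μ • (M0 m0)ᴴ := by
  rw [lsqc, M0, op0_conjT, op0_mul, op0_smul]
  refine op0_ext (fun i i' => ?_) (fun j j' => ?_)
  · fin_cases i <;> fin_cases i' <;>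
      simp [Matrix.mul_apply, Fin.sum_univ_two, Matrix.mul_smul,
        apply_ite Matrix.conjTranspose]
  · simp [Matrix.mul_apply, Fintype.sum_prod_type]

lemma lsqc_M (μ : ℂ) (m : Matrix (Fin 3) (Fin 3) ℂ) :
    lsqc μ m * M0 m0 = μ • M0 m0 := by
  rw [lsqc, M0, op0_mul, op0_smul]
  refine op0_ext (fun i i' => ?_) (fun j j' => ?_)
  · fin_cases i <;> fin_cases i' <;>
      simp [Matrix.mul_apply, Fin.sum_univ_two, Matrix.smul_mul]
  · simp [Matrix.mul_apply, Fintype.sum_prod_type]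

lemma M_tild (l : ℂ) :
    M0 m0 * tild (qmat l) = l • M0 m0 := by
  rw [tild, M0, op0_mul, op0_smul]
  refine op0_ext (fun i i' => ?_) (fun j j' => ?_)
  · fin_cases i <;> fin_cases i' <;>
      simp [Matrix.mul_apply, Fin.sum_univ_two, qmat, Matrix.mul_smul]
  · simp [Matrix.mul_apply, Fintype.sum_prod_type]


lemma op0_addl (fl gl fq gq) : op0 (N := N) fl fq + op0 gl gq
    = op0 (fun i i' => fl i i' + gl i i') (fun j j' => fq j j' + gq j j') := by
  ext ⟨p1, p2⟩ ⟨q1, q2⟩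
  cases p1 <;> cases q1 <;> simp [op0]

lemma tild_add (a b : Matrix (Fin 2) (Fin 2) ℂ) :
    tild (N := N) (a + b) = tild a + tild b := by
  rw [tild, tild, tild, op0_addl]
  refine op0_ext (fun i i' => ?_) (fun j j' => ?_)
  · simp [add_smul]
  · by_cases h : j.2 = j'.2 <;> simp [h, add_smul]

lemma op0_rsmul (r : ℝ) (fl fq) :
    r • op0 (N := N) fl fq = op0 (fun i i' => r • fl i i') (fun j j' => r • fq j j') := by
  ext ⟨p1, p2⟩ ⟨q1, q2⟩
  cases p1 <;> cases q1 <;> simp [op0]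

lemma op0_subl (fl gl fq gq) : op0 (N := N) fl fq - op0 gl gq
    = op0 (fun i i' => fl i i' - gl i i') (fun j j' => fq j j' - gq j j') := by
  ext ⟨p1, p2⟩ ⟨q1, q2⟩
  cases p1 <;> cases q1 <;> simp [op0]

lemma tild_sub (a b : Matrix (Fin 2) (Fin 2) ℂ) :
    tild (N := N) (a - b) = tild a - tild b := by
  rw [tild, tild, tild, op0_subl]
  refine op0_ext (fun i i' => ?_) (fun j j' => ?_)
  · simp [sub_smul]
  · by_cases h : j.2 = j'.2 <;> simp [h, sub_smul]

lemma tild_zero : tild (N := N) 0 = 0 := by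
  rw [tild]
  ext ⟨p1, p2⟩ ⟨q1, q2⟩
  cases p1 <;> cases q1 <;> simp [op0]

lemma tild_rsmul (r : ℝ) (a : Matrix (Fin 2) (Fin 2) ℂ) :
    tild (N := N) (r • a) = r • tild a := by
  rw [tild, tild, op0_rsmul]
  refine op0_ext (fun i i' => ?_) (fun j j' => ?_)
  · simp [mul_smul, ← Complex.coe_algebraMap, algebraMap_smul]
  · by_cases h : j.2 = j'.2 <;>
      simp [h, mul_smul, ← Complex.coe_algebraMap, algebraMap_smul]

lemma qmat_one : qmat 1 = 1 := by
  ext i j; fin_cases i <;> fin_cases j <;> simp [qmat, Matrix.one_apply]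

lemma qmat_zero : qmat 0 = 0 := by
  ext i j; fin_cases i <;> fin_cases j <;> simp [qmat]

lemma IsQuat_zero : IsQuat 0 := by constructor <;> simp
lemma IsQuat_one : IsQuat 1 := by constructor <;> simp [Matrix.one_apply]
lemma IsQuat_qmat (l : ℂ) : IsQuat (qmat l) := by constructor <;> simp [qmat]
lemma IsQuat.add {a b} (ha : IsQuat a) (hb : IsQuat b) : IsQuat (a + b) := by
  obtain ⟨h1, h2⟩ := ha; obtain ⟨h3, h4⟩ := hb
  constructor <;> simp [h1, h2, h3, h4] <;> ring
lemma IsQuat.neg {a} (ha : IsQuat a) : IsQuat (-a) := by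
  obtain ⟨h1, h2⟩ := ha
  constructor <;> simp [h1, h2]
lemma IsQuat.sub {a b} (ha : IsQuat a) (hb : IsQuat b) : IsQuat (a - b) := by
  obtain ⟨h1, h2⟩ := ha; obtain ⟨h3, h4⟩ := hb
  constructor <;> simp [h1, h2, h3, h4] <;> ring
lemma IsQuat.mul {a b} (ha : IsQuat a) (hb : IsQuat b) : IsQuat (a * b) := by
  obtain ⟨h1, h2⟩ := ha; obtain ⟨h3, h4⟩ := hb
  constructor <;>
    simp [Matrix.mul_apply, Fin.sum_univ_two, h1, h2, h3, h4] <;> ring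
lemma IsQuat.rsmul (r : ℝ) {a} (ha : IsQuat a) : IsQuat (r • a) := by
  obtain ⟨h1, h2⟩ := ha
  constructor <;> simp [h1, h2, Complex.star_def, Complex.conj_ofReal] <;> ring

end Aux


lemma mulFin4 {α : Type*} [NonUnitalNonAssocSemiring α] (a00 a01 a02 a03 a10 a11 a12 a13 a20 a21 a22 a23 a30 a31 a32 a33 b00 b01 b02 b03 b10 b11 b12 b13 b20 b21 b22 b23 b30 b31 b32 b33 : α) :
    !![a00, a01, a02, a03; a10, a11, a12, a13; a20, a21, a22, a23; a30, a31, a32, a33] * !![b00, b01, b02, b03; b10, b11, b12, b13; b20, b21, b22, b23; b30, b31, b32, b33] = !![a00 * b00 + a01 * b10 + a02 * b20 + a03 * b30, a00 * b01 + a01 * b11 + a02 * b21 + a03 * b31, a00 * b02 + a01 * b12 + a02 * b22 + a03 * b32, a00 * b03 + a01 * b13 + a02 * b23 + a03 * b33; a10 * b00 + a11 * b10 + a12 * b20 + a13 * b30, a10 * b01 + a11 * b11 + a12 * b21 + a13 * b31, a10 * b02 + a11 * b12 + a12 * b22 + a13 * b32, a10 * b03 + a11 * b13 + a12 * b23 +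 a13 * b33; a20 * b00 + a21 * b10 + a22 * b20 + a23 * b30, a20 * b01 + a21 * b11 + a22 * b21 + a23 * b31, a20 * b02 + a21 * b12 + a22 * b22 + a23 * b32, a20 * b03 + a21 * b13 + a22 * b23 + a23 * b33; a30 * b00 + a31 * b10 + a32 * b20 + a33 * b30, a30 * b01 + a31 * b11 + a32 * b21 + a33 * b31, a30 * b02 + a31 * b12 + a32 * b22 + a33 * b32, a30 * b03 + a31 * b13 + a32 * b23 + a33 * b33] := by
  ext i j
  fin_cases i <;> fin_cases j <;>
    simp [Matrix.mul_apply, Fin.sum_univ_four, add_assoc]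

lemma subFin4 {α : Type*} [SubtractionMonoid α] (a00 a01 a02 a03 a10 a11 a12 a13 a20 a21 a22 a23 a30 a31 a32 a33 b00 b01 b02 b03 b10 b11 b12 b13 b20 b21 b22 b23 b30 b31 b32 b33 : α) :
    !![a00, a01, a02, a03; a10, a11, a12, a13; a20, a21, a22, a23; a30, a31, a32, a33] - !![b00, b01, b02, b03; b10, b11, b12, b13; b20, b21, b22, b23; b30, b31, b32, b33] = !![a00 - b00, a01 - b01, a02 - b02, a03 - b03; a10 - b10, a11 - b11, a12 - b12, a13 - b13; a20 - b20, a21 - b21, a22 - b22, a23 - b23; a30 - b30, a31 - b31, a32 - b32, a33 - b33] := by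
  ext i j
  fin_cases i <;> fin_cases j <;> simp

section Main
variable {N : ℕ} (s : ℂ) (Yν Ye Yu Yd m0 : Matrix (Fin N) (Fin N) ℂ)

/-- Normal form of elements of `Ω¹_F ⊕ Ω¹_σ`. -/
def Wf (q1 q2 : Matrix (Fin 2) (Fin 2) ℂ) (z1 z2 : ℂ) : OpF N :=
  mk4 !![0, (Y0 Yν Ye Yu Yd)ᴴ * tild q1, z2 • (M0 m0)ᴴ, 0;
         tild q2 * Y0 Yν Ye Yu Yd, 0, 0, 0;
         z1 • M0 m0, 0, 0, 0;
         0, 0, 0, 0]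

set_option maxHeartbeats 2000000 in
lemma key (l1 l2 l3 μ1 μ2 μ3 : ℂ) (q1 q2 q3 : Matrix (Fin 2) (Fin 2) ℂ)
    (m1 m2 m3 : Matrix (Fin 3) (Fin 3) ℂ) :
    rep l1 q1 m1 μ1 *
        (DF s Yν Ye Yu Yd m0 * rep l2 q2 m2 μ2
          - rep l2 q2 m2 μ2 * DF s Yν Ye Yu Yd m0) *
        rep l3 q3 m3 μ3
      = Wf Yν Ye Yu Yd m0 (qmat l1 * (qmat l2 - q2) * q3)
          (q1 * (qmat l2 - q2) * qmat l3) (μ1 * (l2 - μ2) * l3)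
          (s * l1 * (μ2 - l2) * μ3) := by
  rw [rep, rep, rep, DF, Wf, mk4_mul, mk4_mul, mk4_sub, mk4_mul, mk4_mul]
  refine congrArg mk4 ?_
  simp only [mulFin4, subFin4]
  refine Matrix.ext fun i j => ?_
  fin_cases i <;> fin_cases j <;>
    simp
  · -- (0,1)
    have h : -((Y0 Yν Ye Yu Yd)ᴴ * tild q2) + tild (qmat l2) * (Y0 Yν Ye Yu Yd)ᴴ
        = (Y0 Yν Ye Yu Yd)ᴴ * tild (qmat l2 - q2) := by
      rw [comm_YH, tild_sub, Matrix.mul_sub, neg_add_eq_sub]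
    rw [h, ← tild_mul, ← tild_mul, ← Matrix.mul_assoc, comm_YH]
    noncomm_ring
  · -- (0,2)
    simp only [MH_lsqc, tild_MH, smul_smul, ← sub_smul, Matrix.mul_smul, Matrix.smul_mul]
    congr 1; ring
  · -- (1,0)
    have h : Y0 Yν Ye Yu Yd * tild (qmat l2) - tild q2 * Y0 Yν Ye Yu Yd
        = tild (qmat l2 - q2) * Y0 Yν Ye Yu Yd := by
      rw [tild_sub, Matrix.sub_mul, comm_Y]
    rw [h, ← Matrix.mul_assoc, Matrix.mul_assoc _ (Y0 Yν Ye Yu Yd) _, ← comm_Y,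
      ← Matrix.mul_assoc, ← tild_mul, ← tild_mul]
  · -- (2,0)
    simp only [M_tild, lsqc_M, smul_smul, ← sub_smul, Matrix.mul_smul, Matrix.smul_mul]
    congr 1; ring
  · -- (2,3)
    rw [comm_Yt, neg_add_cancel]
    simp [Matrix.vecHead, Matrix.vecTail]
  · -- (3,2)
    rw [comm_Ystar, sub_self]
    simp [Matrix.vecHead, Matrix.vecTail]

lemma mk4_addl (B C : Matrix (Fin 4) (Fin 4) (Op0 N)) : mk4 B + mk4 C = mk4 (B + C) := rfl

lemma mk4_rsmull (r : ℝ) (B : Matrix (Fin 4) (Fin 4) (Op0 N)) : r • mk4 B = mk4 (r • B) := rfl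

lemma Wf_add (q1 q2 q1' q2' : Matrix (Fin 2) (Fin 2) ℂ) (z1 z2 z1' z2' : ℂ) :
    Wf Yν Ye Yu Yd m0 q1 q2 z1 z2 + Wf Yν Ye Yu Yd m0 q1' q2' z1' z2'
      = Wf Yν Ye Yu Yd m0 (q1 + q1') (q2 + q2') (z1 + z1') (z2 + z2') := by
  rw [Wf, Wf, Wf, mk4_addl]
  refine congrArg mk4 (Matrix.ext fun i j => ?_)
  fin_cases i <;> fin_cases j <;>
    simp [tild_add, Matrix.mul_add, Matrix.add_mul, add_smul, Matrix.vecHead, Matrix.vecTail]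

lemma Wf_rsmul (r : ℝ) (q1 q2 : Matrix (Fin 2) (Fin 2) ℂ) (z1 z2 : ℂ) :
    r • Wf Yν Ye Yu Yd m0 q1 q2 z1 z2
      = Wf Yν Ye Yu Yd m0 (r • q1) (r • q2) (r • z1) (r • z2) := by
  rw [Wf, Wf, mk4_rsmull]
  refine congrArg mk4 (Matrix.ext fun i j => ?_)
  fin_cases i <;> fin_cases j <;>
    simp [tild_rsmul, Matrix.mul_smul, Matrix.smul_mul, smul_assoc, Matrix.vecHead, Matrix.vecTail,
      mul_smul, ← Complex.coe_algebraMap, algebraMap_smul]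

lemma Wf_zero : Wf Yν Ye Yu Yd m0 0 0 0 0 = 0 := by
  rw [Wf]
  refine Matrix.ext fun p q => ?_
  rw [mk4_apply]
  obtain ⟨i, p0⟩ := p; obtain ⟨j, q0⟩ := q
  fin_cases i <;> fin_cases j <;> simp [tild_zero, Matrix.vecHead, Matrix.vecTail]

lemma WfF (q1 q2 : Matrix (Fin 2) (Fin 2) ℂ) :
    Wf Yν Ye Yu Yd m0 q1 q2 0 0
      = mk4 !![0, (Y0 Yν Ye Yu Yd)ᴴ * tild q1, 0, 0;
               tild q2 * Y0 Yν Ye Yu Yd, 0, 0, 0;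
               0, 0, 0, 0;
               0, 0, 0, 0] := by
  rw [Wf]
  refine congrArg mk4 (Matrix.ext fun i j => ?_)
  fin_cases i <;> fin_cases j <;> simp [Matrix.vecHead, Matrix.vecTail]

lemma Wfσ (z1 z2 : ℂ) :
    Wf Yν Ye Yu Yd m0 0 0 z1 z2
      = mk4 !![0, 0, z2 • (M0 m0)ᴴ, 0;
               0, 0, 0, 0;
               z1 • M0 m0, 0, 0, 0;
               0, 0, 0, 0] := by
  rw [Wf]
  refine congrArg mk4 (Matrix.ext fun i j => ?_)
  fin_cases i <;> fin_cases j <;> simp [tild_zero, Matrix.vecHead, Matrix.vecTail]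

/-- The submodule `Ω¹_F ⊕ Ω¹_σ` in normal form. -/
def TT : Submodule ℝ (OpF N) where
  carrier := {x | ∃ q1 q2 z1 z2, IsQuat q1 ∧ IsQuat q2 ∧ x = Wf Yν Ye Yu Yd m0 q1 q2 z1 z2}
  add_mem' := by
    rintro a b ⟨q1, q2, z1, z2, h1, h2, rfl⟩ ⟨p1, p2, w1, w2, g1, g2, rfl⟩
    exact ⟨_, _, _, _, h1.add g1, h2.add g2, Wf_add _ _ _ _ _ _ _ _ _ _ _ _ _⟩
  zero_mem' := ⟨0, 0, 0, 0, IsQuat_zero, IsQuat_zero, (Wf_zero _ _ _ _ _).symm⟩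
  smul_mem' := by
    rintro r a ⟨q1, q2, z1, z2, h1, h2, rfl⟩
    exact ⟨_, _, _, _, h1.rsmul r, h2.rsmul r, Wf_rsmul _ _ _ _ _ r _ _ _ _⟩

end Main

end

/-- the `π(A_F^ext)`-bimodule generated by the commutators `[D_F, π(b)]`
is the internal direct sum `Ω¹_F ⊕ Ω¹_σ`. -/
theorem stmt4 (N : ℕ) (s : ℂ) (hs : s = 1 ∨ s = -1)
    (Yν Ye Yu Yd m0 : Matrix (Fin N) (Fin N) ℂ) (hm0T : m0ᵀ = (-s) • m0) :
    (↑(Submodule.span ℝ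
      {x : OpF N | ∃ (l1 l2 l3 μ1 μ2 μ3 : ℂ)
          (q1 q2 q3 : Matrix (Fin 2) (Fin 2) ℂ)
          (m1 m2 m3 : Matrix (Fin 3) (Fin 3) ℂ),
          IsQuat q1 ∧ IsQuat q2 ∧ IsQuat q3 ∧
          x = rep l1 q1 m1 μ1 *
              (DF s Yν Ye Yu Yd m0 * rep l2 q2 m2 μ2
                - rep l2 q2 m2 μ2 * DF s Yν Ye Yu Yd m0) *
              rep l3 q3 m3 μ3}) : Set (OpF N))
      = {x : OpF N | ∃ w1 ∈ Omega1F Yν Ye Yu Yd, ∃ w2 ∈ Omega1σ m0, x = w1 + w2} ∧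
    Omega1F Yν Ye Yu Yd ∩ Omega1σ m0 ⊆ {0} := by
  have hss : s * s = 1 := by rcases hs with h | h <;> rw [h] <;> ring
  constructor
  · apply Set.Subset.antisymm
    · -- span ⊆ Ω¹_F + Ω¹_σ
      intro x hx
      have hle : Submodule.span ℝ
          {x : OpF N | ∃ (l1 l2 l3 μ1 μ2 μ3 : ℂ)
            (q1 q2 q3 : Matrix (Fin 2) (Fin 2) ℂ)
            (m1 m2 m3 : Matrix (Fin 3) (Fin 3) ℂ),
            IsQuat q1 ∧ IsQuat q2 ∧ IsQuat q3 ∧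
            x = rep l1 q1 m1 μ1 *
                (DF s Yν Ye Yu Yd m0 * rep l2 q2 m2 μ2
                  - rep l2 q2 m2 μ2 * DF s Yν Ye Yu Yd m0) *
                rep l3 q3 m3 μ3} ≤ TT Yν Ye Yu Yd m0 := by
        refine Submodule.span_le.mpr ?_
        rintro y ⟨l1, l2, l3, μ1, μ2, μ3, q1, q2, q3, m1, m2, m3, hq1, hq2, hq3, rfl⟩
        exact ⟨_, _, _, _,
          ((IsQuat_qmat l1).mul ((IsQuat_qmat l2).sub hq2)).mul hq3,
          (hq1.mul ((IsQuat_qmat l2).sub hq2)).mul (IsQuat_qmat l3),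
          key s Yν Ye Yu Yd m0 l1 l2 l3 μ1 μ2 μ3 q1 q2 q3 m1 m2 m3⟩
      obtain ⟨a1, a2, z1, z2, ha1, ha2, rfl⟩ := hle hx
      refine ⟨Wf Yν Ye Yu Yd m0 a1 a2 0 0, ⟨a1, a2, ha1, ha2, WfF _ _ _ _ _ _ _⟩,
        Wf Yν Ye Yu Yd m0 0 0 z1 z2, ⟨z1, z2, Wfσ _ _ _ _ _ _ _⟩, ?_⟩
      rw [Wf_add]
      simp
    · -- Ω¹_F + Ω¹_σ ⊆ span
      rintro x ⟨w1, ⟨a1, a2, ha1, ha2, rfl⟩, w2, ⟨z1, z2, rfl⟩, rfl⟩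
      rw [← WfF Yν Ye Yu Yd m0 a1 a2, ← Wfσ Yν Ye Yu Yd m0 z1 z2]
      have hsplit : Wf Yν Ye Yu Yd m0 a1 a2 0 0 + Wf Yν Ye Yu Yd m0 0 0 z1 z2
          = Wf Yν Ye Yu Yd m0 a1 0 0 0 + Wf Yν Ye Yu Yd m0 0 a2 0 0
            + Wf Yν Ye Yu Yd m0 0 0 z1 z2 := by
        rw [Wf_add, Wf_add, Wf_add]; simp
      rw [hsplit]
      have g1 : Wf Yν Ye Yu Yd m0 a1 0 0 0 ∈
          {x : OpF N | ∃ (l1 l2 l3 μ1 μ2 μ3 : ℂ)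
            (q1 q2 q3 : Matrix (Fin 2) (Fin 2) ℂ)
            (m1 m2 m3 : Matrix (Fin 3) (Fin 3) ℂ),
            IsQuat q1 ∧ IsQuat q2 ∧ IsQuat q3 ∧
            x = rep l1 q1 m1 μ1 *
                (DF s Yν Ye Yu Yd m0 * rep l2 q2 m2 μ2
                  - rep l2 q2 m2 μ2 * DF s Yν Ye Yu Yd m0) *
                rep l3 q3 m3 μ3} := by
        refine ⟨1, 0, 0, 0, 0, 0, 0, -a1, 1, 0, 0, 0, IsQuat_zero, ha1.neg, IsQuat_one, ?_⟩
        rw [key]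
        simp [qmat_zero, qmat_one]
      have g2 : Wf Yν Ye Yu Yd m0 0 a2 0 0 ∈
          {x : OpF N | ∃ (l1 l2 l3 μ1 μ2 μ3 : ℂ)
            (q1 q2 q3 : Matrix (Fin 2) (Fin 2) ℂ)
            (m1 m2 m3 : Matrix (Fin 3) (Fin 3) ℂ),
            IsQuat q1 ∧ IsQuat q2 ∧ IsQuat q3 ∧
            x = rep l1 q1 m1 μ1 *
                (DF s Yν Ye Yu Yd m0 * rep l2 q2 m2 μ2
                  - rep l2 q2 m2 μ2 * DF s Yν Ye Yu Yd m0) *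
                rep l3 q3 m3 μ3} := by
        refine ⟨0, 0, 1, 0, 0, 0, 1, -a2, 0, 0, 0, 0, IsQuat_one, ha2.neg, IsQuat_zero, ?_⟩
        rw [key]
        simp [qmat_zero, qmat_one]
      have g3 : Wf Yν Ye Yu Yd m0 0 0 z1 z2 ∈
          {x : OpF N | ∃ (l1 l2 l3 μ1 μ2 μ3 : ℂ)
            (q1 q2 q3 : Matrix (Fin 2) (Fin 2) ℂ)
            (m1 m2 m3 : Matrix (Fin 3) (Fin 3) ℂ),
            IsQuat q1 ∧ IsQuat q2 ∧ IsQuat q3 ∧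
            x = rep l1 q1 m1 μ1 *
                (DF s Yν Ye Yu Yd m0 * rep l2 q2 m2 μ2
                  - rep l2 q2 m2 μ2 * DF s Yν Ye Yu Yd m0) *
                rep l3 q3 m3 μ3} := by
        refine ⟨s * z2, 0, 1, -z1, 1, 1, 0, 0, 0, 0, 0, 0,
          IsQuat_zero, IsQuat_zero, IsQuat_zero, ?_⟩
        rw [key]
        simp [qmat_zero, show s * (s * z2) = z2 by rw [← mul_assoc, hss, one_mul]]
      exact Submodule.add_mem _
        (Submodule.add_mem _ (Submodule.subset_span g1) (Submodule.subset_span g2))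
        (Submodule.subset_span g3)
  · -- intersection
    rintro w ⟨⟨a1, a2, ha1, ha2, hF⟩, ⟨z1, z2, hσ⟩⟩
    simp only [Set.mem_singleton_iff]
    refine Matrix.ext fun p q => ?_
    obtain ⟨i, p0⟩ := p; obtain ⟨j, q0⟩ := q
    fin_cases i <;> fin_cases j
    · rw [hF]; rfl
    · rw [hσ]; rfl
    · rw [hF]; rfl
    · rw [hF]; rfl
    · rw [hσ]; rfl
    · rw [hF]; rfl
    · rw [hF]; rfl
    · rw [hF]; rfl
    · rw [hF]; rfl
    · rw [hF]; rfl
    · rw [hF]; rfl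
    · rw [hF]; rfl
    · rw [hF]; rfl
    · rw [hF]; rfl
    · rw [hF]; rfl
    · rw [hF]; rfl
end

section
/- For every invertible element b of the algebra B (the image of the opposite representation of A_F^ext), one has b·(Ω¹_F ⊕ Ω¹_σ)·b⁻¹ = Ω¹_F ⊕ Ω¹_σ; that is, the extended bimodule of 1-forms satisfies the weak order 1 condition. -/
open Matrix Complex
open scoped BigOperators

section Helpers
open Matrix Complex
namespace Test
variable {N : ℕ}

lemma op0_mul (fl fl' : Fin 2 → Fin 2 → Matrix (Fin N) (Fin N) ℂ)
    (fq fq' : Fin 2 × Fin 3 → Fin 2 × Fin 3 → Matrix (Fin N) (Fin N) ℂ) :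
    op0 fl fq * op0 fl' fq'
      = op0 (fun i i' => ∑ k, fl i k * fl' k i') (fun j j' => ∑ k, fq j k * fq' k j') := by
  ext ⟨c, a⟩ ⟨c', b⟩
  rw [Matrix.mul_apply, Fintype.sum_prod_type, Fintype.sum_sum_type]
  cases c <;> cases c' <;>
    simp only [op0, Finset.sum_apply, Matrix.zero_apply, mul_zero, zero_mul,
      Finset.sum_const_zero, add_zero, zero_add, ← Matrix.mul_apply] <;>
    simp [Matrix.mul_apply, Finset.sum_apply, Matrix.sum_apply, Fintype.sum_prod_type]

lemma mk4_mul (A B : Matrix (Fin 4) (Fin 4) (Op0 N)) :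
    mk4 A * mk4 B = mk4 (A * B) := by
  ext ⟨j, x⟩ ⟨j', y⟩
  rw [Matrix.mul_apply, Fintype.sum_prod_type]
  simp only [mk4]
  simp_rw [← Matrix.mul_apply, ← Finset.sum_apply]
  rfl
lemma op0_conjT (fl : Fin 2 → Fin 2 → Matrix (Fin N) (Fin N) ℂ)
    (fq : Fin 2 × Fin 3 → Fin 2 × Fin 3 → Matrix (Fin N) (Fin N) ℂ) :
    (op0 fl fq)ᴴ = op0 (fun i i' => (fl i' i)ᴴ) (fun j j' => (fq j' j)ᴴ) := by
  ext ⟨c, a⟩ ⟨c', b⟩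
  cases c <;> cases c' <;>
    simp [op0, Matrix.conjTranspose_apply]

lemma op0_smul (z : ℂ) (fl : Fin 2 → Fin 2 → Matrix (Fin N) (Fin N) ℂ)
    (fq : Fin 2 × Fin 3 → Fin 2 × Fin 3 → Matrix (Fin N) (Fin N) ℂ) :
    z • op0 fl fq = op0 (fun i i' => z • fl i i') (fun j j' => z • fq j j') := by
  ext ⟨c, a⟩ ⟨c', b⟩
  cases c <;> cases c' <;> simp [op0]

lemma op0_congr {fl fl' : Fin 2 → Fin 2 → Matrix (Fin N) (Fin N) ℂ}
    {fq fq' : Fin 2 × Fin 3 → Fin 2 × Fin 3 → Matrix (Fin N) (Fin N) ℂ}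
    (h1 : ∀ i i', fl i i' = fl' i i') (h2 : ∀ j j', fq j j' = fq' j j') :
    op0 fl fq = op0 fl' fq' := by
  have : fl = fl' := by funext i i'; exact h1 i i'
  have h2' : fq = fq' := by funext j j'; exact h2 j j'
  rw [this, h2']

lemma tild_zero : (tild 0 : Op0 N) = 0 := by
  ext ⟨c, a⟩ ⟨c', b⟩
  cases c <;> cases c' <;> simp [tild, op0]
lemma lsqc_comm (μ : ℂ) (m : Matrix (Fin 3) (Fin 3) ℂ)
    (fl G : Fin 2 → Fin 2 → Matrix (Fin N) (Fin N) ℂ) :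
    lsqc μ m * op0 fl (fun j j' => if j.2 = j'.2 then G j.1 j'.1 else 0)
      = op0 fl (fun j j' => if j.2 = j'.2 then G j.1 j'.1 else 0) * lsqc μ m := by
  rw [lsqc, op0_mul, op0_mul]
  refine op0_congr (fun i i' => ?_) (fun j j' => ?_)
  · simp [ite_mul, mul_ite, Finset.sum_ite_eq, Finset.sum_ite_eq', smul_mul_assoc,
      mul_smul_comm]
  · rcases j with ⟨j1, j2⟩; rcases j' with ⟨j1', j2'⟩
    simp [Fintype.sum_prod_type, ite_mul, mul_ite, Finset.sum_ite_eq, Finset.sum_ite_eq',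
      smul_mul_assoc, mul_smul_comm]
lemma lsqc_comm_tild (μ : ℂ) (m : Matrix (Fin 3) (Fin 3) ℂ) (a : Matrix (Fin 2) (Fin 2) ℂ) :
    (lsqc μ m : Op0 N) * tild a = tild a * lsqc μ m :=
  lsqc_comm μ m _ (fun i i' => a i i' • 1)

lemma Y0_eq (Yν Ye Yu Yd : Matrix (Fin N) (Fin N) ℂ) :
    Y0 Yν Ye Yu Yd = op0 (fun i i' => if i = i' then (if i = 0 then Yν else Ye) else 0)
      (fun j j' => if j.2 = j'.2 then
        (fun i i' : Fin 2 => if i = i' then (if i = 0 then Yu else Yd) else 0) j.1 j'.1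
        else 0) := by
  rw [Y0]
  refine op0_congr (fun i i' => rfl) (fun j j' => ?_)
  rcases j with ⟨j1, j2⟩; rcases j' with ⟨j1', j2'⟩
  by_cases h1 : j1 = j1' <;> by_cases h2 : j2 = j2' <;> simp [Prod.ext_iff, h1, h2]

lemma lsqc_comm_Y0 (μ : ℂ) (m : Matrix (Fin 3) (Fin 3) ℂ)
    (Yν Ye Yu Yd : Matrix (Fin N) (Fin N) ℂ) :
    lsqc μ m * Y0 Yν Ye Yu Yd = Y0 Yν Ye Yu Yd * lsqc μ m := by
  rw [Y0_eq]
  exact lsqc_comm μ m _ (fun i i' => if i = i' then (if i = 0 then Yu else Yd) else 0)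

lemma Y0_conjT (Yν Ye Yu Yd : Matrix (Fin N) (Fin N) ℂ) :
    (Y0 Yν Ye Yu Yd)ᴴ = Y0 Yνᴴ Yeᴴ Yuᴴ Ydᴴ := by
  rw [Y0, Y0, op0_conjT]
  refine op0_congr (fun i i' => ?_) (fun j j' => ?_)
  · by_cases h : i = i' <;> simp [h, eq_comm]
    · subst h; by_cases h0 : i = 0 <;> simp [h0]
  · by_cases h : j = j' <;> simp [h, eq_comm]
    · subst h; by_cases h0 : j.1 = 0 <;> simp [h0]

lemma lsqc_comm_Y0H (μ : ℂ) (m : Matrix (Fin 3) (Fin 3) ℂ)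
    (Yν Ye Yu Yd : Matrix (Fin N) (Fin N) ℂ) :
    lsqc μ m * (Y0 Yν Ye Yu Yd)ᴴ = (Y0 Yν Ye Yu Yd)ᴴ * lsqc μ m := by
  rw [Y0_conjT]; exact lsqc_comm_Y0 μ m _ _ _ _
lemma M0_conjT (m0 : Matrix (Fin N) (Fin N) ℂ) :
    (M0 m0)ᴴ = op0 (fun i i' => if i = 0 ∧ i' = 0 then m0ᴴ else 0) (fun _ _ => (0:Matrix (Fin N) (Fin N) ℂ)) := by
  rw [M0, op0_conjT]
  refine op0_congr (fun i i' => ?_) (fun j j' => by simp)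
  by_cases h : i = 0 ∧ i' = 0
  · simp [h.1, h.2]
  · rw [if_neg h, if_neg (by tauto), Matrix.conjTranspose_zero]

lemma lsqc_mul_M0H (μ : ℂ) (m : Matrix (Fin 3) (Fin 3) ℂ) (m0 : Matrix (Fin N) (Fin N) ℂ) :
    lsqc μ m * (M0 m0)ᴴ = μ • (M0 m0)ᴴ := by
  rw [M0_conjT, lsqc, op0_mul, op0_smul]
  refine op0_congr (fun i i' => ?_) (fun j j' => by simp)
  fin_cases i <;> fin_cases i' <;>
    simp [Fin.sum_univ_two, ite_mul, mul_ite, smul_mul_assoc, mul_smul_comm, smul_ite, smul_ite]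

lemma M0H_mul_tq (l : ℂ) (m0 : Matrix (Fin N) (Fin N) ℂ) :
    (M0 m0)ᴴ * tild (qmat l) = l • (M0 m0)ᴴ := by
  rw [M0_conjT, tild, op0_mul, op0_smul]
  refine op0_congr (fun i i' => ?_) (fun j j' => by simp)
  fin_cases i <;> fin_cases i' <;>
    simp [Fin.sum_univ_two, ite_mul, mul_ite, smul_mul_assoc, mul_smul_comm, smul_ite, smul_ite, qmat]

lemma tq_mul_M0 (l : ℂ) (m0 : Matrix (Fin N) (Fin N) ℂ) :
    tild (qmat l) * M0 m0 = l • M0 m0 := by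
  rw [M0, tild, op0_mul, op0_smul]
  refine op0_congr (fun i i' => ?_) (fun j j' => by simp)
  fin_cases i <;> fin_cases i' <;>
    simp [Fin.sum_univ_two, ite_mul, mul_ite, smul_mul_assoc, mul_smul_comm, smul_ite, smul_ite, qmat]

lemma M0_mul_lsqc (μ : ℂ) (m : Matrix (Fin 3) (Fin 3) ℂ) (m0 : Matrix (Fin N) (Fin N) ℂ) :
    M0 m0 * lsqc μ m = μ • M0 m0 := by
  rw [M0, lsqc, op0_mul, op0_smul]
  refine op0_congr (fun i i' => ?_) (fun j j' => by simp)
  fin_cases i <;> fin_cases i' <;>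
    simp [Fin.sum_univ_two, ite_mul, mul_ite, smul_mul_assoc, mul_smul_comm, smul_ite, smul_ite]
lemma lsqc_commA (μ : ℂ) (m : Matrix (Fin 3) (Fin 3) ℂ) (Yν Ye Yu Yd : Matrix (Fin N) (Fin N) ℂ)
    (q1 : Matrix (Fin 2) (Fin 2) ℂ) :
    lsqc μ m * ((Y0 Yν Ye Yu Yd)ᴴ * tild q1) = (Y0 Yν Ye Yu Yd)ᴴ * tild q1 * lsqc μ m := by
  rw [← mul_assoc, lsqc_comm_Y0H, mul_assoc, lsqc_comm_tild, ← mul_assoc]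

lemma lsqc_commB (μ : ℂ) (m : Matrix (Fin 3) (Fin 3) ℂ) (Yν Ye Yu Yd : Matrix (Fin N) (Fin N) ℂ)
    (q2 : Matrix (Fin 2) (Fin 2) ℂ) :
    lsqc μ m * (tild q2 * Y0 Yν Ye Yu Yd) = tild q2 * Y0 Yν Ye Yu Yd * lsqc μ m := by
  rw [← mul_assoc, lsqc_comm_tild, mul_assoc, lsqc_comm_Y0, ← mul_assoc]

lemma Bop_comm_wF (l μ : ℂ) (q : Matrix (Fin 2) (Fin 2) ℂ) (m : Matrix (Fin 3) (Fin 3) ℂ)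
    (Yν Ye Yu Yd : Matrix (Fin N) (Fin N) ℂ) (q1 q2 : Matrix (Fin 2) (Fin 2) ℂ) :
    Bop l μ q m * mk4 !![0, (Y0 Yν Ye Yu Yd)ᴴ * tild q1, 0, 0;
               tild q2 * Y0 Yν Ye Yu Yd, 0, 0, 0; 0, 0, 0, 0; 0, 0, 0, 0]
      = mk4 !![0, (Y0 Yν Ye Yu Yd)ᴴ * tild q1, 0, 0;
               tild q2 * Y0 Yν Ye Yu Yd, 0, 0, 0; 0, 0, 0, 0; 0, 0, 0, 0] * Bop l μ q m := by
  rw [Bop, mk4_mul, mk4_mul]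
  refine congrArg mk4 ?_
  refine Matrix.ext fun i j => ?_
  fin_cases i <;> fin_cases j <;>
    simp [Matrix.mul_apply, Fin.sum_univ_succ, lsqc_commA, lsqc_commB, Matrix.vecHead, Matrix.vecTail]
lemma Bop_comm_wσ (l μ : ℂ) (q : Matrix (Fin 2) (Fin 2) ℂ) (m : Matrix (Fin 3) (Fin 3) ℂ)
    (m0 : Matrix (Fin N) (Fin N) ℂ) (z1 z2 z1' z2' : ℂ)
    (hz1 : l * z1' = μ * z1) (hz2 : μ * z2' = l * z2) :
    Bop l μ q m * mk4 !![0, 0, z2' • (M0 m0)ᴴ, 0; 0, 0, 0, 0;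
        z1' • M0 m0, 0, 0, 0; 0, 0, 0, 0]
      = mk4 !![0, 0, z2 • (M0 m0)ᴴ, 0; 0, 0, 0, 0;
        z1 • M0 m0, 0, 0, 0; 0, 0, 0, 0] * Bop l μ q m := by
  rw [Bop, mk4_mul, mk4_mul]
  refine congrArg mk4 ?_
  refine Matrix.ext fun i j => ?_
  fin_cases i <;> fin_cases j <;>
    simp [Matrix.mul_apply, Fin.sum_univ_succ, Matrix.vecHead, Matrix.vecTail,
      mul_smul_comm, smul_mul_assoc, lsqc_mul_M0H, M0H_mul_tq, tq_mul_M0, M0_mul_lsqc,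
      smul_smul]
  · congr 1; linear_combination hz2
  · congr 1; linear_combination hz1
lemma qmat_zero : qmat 0 = 0 := by
  ext i j; fin_cases i <;> fin_cases j <;> simp [qmat]

lemma unit_l_ne (l μ : ℂ) (q : Matrix (Fin 2) (Fin 2) ℂ) (m : Matrix (Fin 3) (Fin 3) ℂ)
    (g0 : Fin N) (u : (OpF N)ˣ) (hu : (u : OpF N) = Bop l μ q m) : l ≠ 0 := by
  intro h
  subst h
  set p : IF N := ((2 : Fin 4), (Sum.inl 0, g0)) with hp
  have h1 : ((u : OpF N) * ((u⁻¹ : (OpF N)ˣ) : OpF N)) p p = 1 := by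
    rw [Units.mul_inv]; simp [Matrix.one_apply]
  rw [Matrix.mul_apply] at h1
  have hrow : ∀ k, (u : OpF N) p k = 0 := by
    intro ⟨j, x⟩
    rw [hu]
    fin_cases j <;>
      simp [Bop, mk4, hp, qmat_zero, tild_zero, Matrix.vecHead, Matrix.vecTail]
  simp only [hrow, zero_mul, Finset.sum_const_zero] at h1
  exact zero_ne_one h1

lemma lsqc_zero_lepton_row (m : Matrix (Fin 3) (Fin 3) ℂ) (i : Fin 2) (a : Fin N) (x : I0 N) :
    (lsqc 0 m : Op0 N) (Sum.inl i, a) x = 0 := by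
  obtain ⟨c, b⟩ := x
  cases c <;> simp [lsqc, op0]

lemma unit_μ_ne (l μ : ℂ) (q : Matrix (Fin 2) (Fin 2) ℂ) (m : Matrix (Fin 3) (Fin 3) ℂ)
    (g0 : Fin N) (u : (OpF N)ˣ) (hu : (u : OpF N) = Bop l μ q m) : μ ≠ 0 := by
  intro h
  subst h
  set p : IF N := ((0 : Fin 4), (Sum.inl 0, g0)) with hp
  have h1 : ((u : OpF N) * ((u⁻¹ : (OpF N)ˣ) : OpF N)) p p = 1 := by
    rw [Units.mul_inv]; simp [Matrix.one_apply]
  rw [Matrix.mul_apply] at h1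
  have hrow : ∀ k, (u : OpF N) p k = 0 := by
    intro ⟨j, x⟩
    rw [hu]
    fin_cases j <;>
      simp [Bop, mk4, hp, lsqc_zero_lepton_row, Matrix.vecHead, Matrix.vecTail]
  simp only [hrow, zero_mul, Finset.sum_const_zero] at h1
  exact zero_ne_one h1
lemma conj_eq (u : (OpF N)ˣ) (a b : OpF N) (h : (u : OpF N) * a = b * u) :
    (u : OpF N) * a * ((u⁻¹ : (OpF N)ˣ) : OpF N) = b := by
  rw [h, Units.mul_inv_cancel_right]

end Test

end Helpers

/-- weak order-1 condition: conjugation by any invertible element of the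
algebra `B` (the image of the opposite representation of `A_F^ext`) preserves the
extended bimodule of 1-forms `Ω¹_F ⊕ Ω¹_σ`. -/
theorem stmt5 (N : ℕ) (s : ℂ) (hs : s = 1 ∨ s = -1)
    (Yν Ye Yu Yd m0 : Matrix (Fin N) (Fin N) ℂ) (hm0T : m0ᵀ = (-s) • m0)
    (l μ : ℂ) (q : Matrix (Fin 2) (Fin 2) ℂ) (hq : IsQuat q)
    (m : Matrix (Fin 3) (Fin 3) ℂ)
    (u : (OpF N)ˣ) (hu : (u : OpF N) = Bop l μ q m) :
    (fun x : OpF N => (u : OpF N) * x * ((u⁻¹ : (OpF N)ˣ) : OpF N)) ''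
        {x : OpF N | ∃ w1 ∈ Omega1F Yν Ye Yu Yd, ∃ w2 ∈ Omega1σ m0, x = w1 + w2}
      = {x : OpF N | ∃ w1 ∈ Omega1F Yν Ye Yu Yd, ∃ w2 ∈ Omega1σ m0, x = w1 + w2} := by
  rcases Nat.eq_zero_or_pos N with h0 | hN
  · subst h0
    have key : ∀ a b : OpF 0, a = b := fun a b => Matrix.ext fun i _ => i.2.2.elim0
    ext x
    simp only [Set.mem_image, Set.mem_setOf_eq]
    constructor
    · rintro ⟨y, ⟨w1, h1, w2, h2, rfl⟩, rfl⟩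
      exact ⟨w1, h1, w2, h2, key _ _⟩
    · intro hx
      exact ⟨x, hx, key _ _⟩
  · have g0 : Fin N := ⟨0, hN⟩
    have hl : l ≠ 0 := Test.unit_l_ne l μ q m g0 u hu
    have hμ : μ ≠ 0 := Test.unit_μ_ne l μ q m g0 u hu
    apply Set.Subset.antisymm
    · rintro x ⟨y, ⟨w1, ⟨q1, q2, hq1, hq2, rfl⟩, w2, ⟨z1, z2, rfl⟩, rfl⟩, rfl⟩
      refine ⟨_, ⟨q1, q2, hq1, hq2, rfl⟩,
        mk4 !![0, 0, (μ * z2 / l) • (M0 m0)ᴴ, 0; 0, 0, 0, 0;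
          (l * z1 / μ) • M0 m0, 0, 0, 0; 0, 0, 0, 0], ⟨l * z1 / μ, μ * z2 / l, rfl⟩, ?_⟩
      simp only [mul_add, add_mul]
      congr 1
      · exact Test.conj_eq u _ _ (by rw [hu]; exact Test.Bop_comm_wF l μ q m Yν Ye Yu Yd q1 q2)
      · refine Test.conj_eq u _ _ (by rw [hu]; exact Test.Bop_comm_wσ l μ q m m0 _ _ z1 z2 (by field_simp; try ring) (by field_simp; try ring))
    · rintro x ⟨w1, ⟨q1, q2, hq1, hq2, rfl⟩, w2, ⟨z1, z2, rfl⟩, rfl⟩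
      refine ⟨mk4 !![0, (Y0 Yν Ye Yu Yd)ᴴ * tild q1, 0, 0;
               tild q2 * Y0 Yν Ye Yu Yd, 0, 0, 0; 0, 0, 0, 0; 0, 0, 0, 0]
          + mk4 !![0, 0, (l * z2 / μ) • (M0 m0)ᴴ, 0; 0, 0, 0, 0;
          (μ * z1 / l) • M0 m0, 0, 0, 0; 0, 0, 0, 0],
        ⟨_, ⟨q1, q2, hq1, hq2, rfl⟩, _, ⟨μ * z1 / l, l * z2 / μ, rfl⟩, rfl⟩, ?_⟩
      simp only [mul_add, add_mul]
      congr 1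
      · exact Test.conj_eq u _ _ (by rw [hu]; exact Test.Bop_comm_wF l μ q m Yν Ye Yu Yd q1 q2)
      · refine Test.conj_eq u _ _ (by rw [hu]; exact Test.Bop_comm_wσ l μ q m m0 z1 z2 _ _ (by field_simp; try ring) (by field_simp; try ring))
end

section
/- Let o : M_n(ℂ) → M_n(ℂ) be a ℂ-linear map satisfying (X·Y)^o = Y^o·X^o for all X, Y ∈ M_n(ℂ), and let D ∈ M_n(ℂ) satisfy D^o = D. Then for any finite families aᵢ, bᵢ ∈ M_n(ℂ), setting ω := Σᵢ aᵢ·[D,bᵢ], the following exact identities hold: (i) [D,b]^o = −[D, b^o] for all b; (ii) ω^o = Σᵢ ( bᵢ^o·[D, aᵢ^o] − [D, bᵢ^o·aᵢ^o] ); (iii) (Σᵢ [D,aᵢ]·[D,bᵢ])^o = Σᵢ [D, bᵢ^o]·[D, aᵢ^o]; (iv) consequently, writing ρ := Σᵢ [D,aᵢ][D,bᵢ] + ω², one has Σᵢ [D,aᵢ][D,bᵢ] + Σᵢ [D,bᵢ^o][D,aᵢ^o] + (ω + ω^o)² = ρ + ρ^o + (ω·ω^o + ω^o·ω). -/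
open scoped BigOperators

/-- exact identities for a ℂ-linear anti-homomorphism `o` of `M_n(ℂ)`
fixing `D`: behaviour on commutators, on 1-forms `ω = ∑ aᵢ[D,bᵢ]`, on 2-forms,
and the curvature identity for `ω + ω^o`. -/
theorem stmt18 (n : ℕ)
    (o : Matrix (Fin n) (Fin n) ℂ →ₗ[ℂ] Matrix (Fin n) (Fin n) ℂ)
    (hmul : ∀ X Y : Matrix (Fin n) (Fin n) ℂ, o (X * Y) = o Y * o X)
    (D : Matrix (Fin n) (Fin n) ℂ) (hD : o D = D) :
    (∀ b : Matrix (Fin n) (Fin n) ℂ,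
      o (D * b - b * D) = -(D * o b - o b * D)) ∧
    (∀ (k : ℕ) (a b : Fin k → Matrix (Fin n) (Fin n) ℂ),
      o (∑ i, a i * (D * b i - b i * D))
        = ∑ i, (o (b i) * (D * o (a i) - o (a i) * D)
            - (D * (o (b i) * o (a i)) - (o (b i) * o (a i)) * D))) ∧
    (∀ (k : ℕ) (a b : Fin k → Matrix (Fin n) (Fin n) ℂ),
      o (∑ i, (D * a i - a i * D) * (D * b i - b i * D))
        = ∑ i, (D * o (b i) - o (b i) * D) * (D * o (a i) - o (a i) * D)) ∧
    (∀ (k : ℕ) (a b : Fin k → Matrix (Fin n) (Fin n) ℂ),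
      (∑ i, (D * a i - a i * D) * (D * b i - b i * D))
        + (∑ i, (D * o (b i) - o (b i) * D) * (D * o (a i) - o (a i) * D))
        + ((∑ i, a i * (D * b i - b i * D)) + o (∑ i, a i * (D * b i - b i * D))) ^ 2
      = ((∑ i, (D * a i - a i * D) * (D * b i - b i * D))
            + (∑ i, a i * (D * b i - b i * D)) ^ 2)
        + o ((∑ i, (D * a i - a i * D) * (D * b i - b i * D))
            + (∑ i, a i * (D * b i - b i * D)) ^ 2)
        + ((∑ i, a i * (D * b i - b i * D)) * o (∑ i, a i * (D * b i - b i * D))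
           + o (∑ i, a i * (D * b i - b i * D)) * (∑ i, a i * (D * b i - b i * D)))) := by
  have h1 : ∀ b : Matrix (Fin n) (Fin n) ℂ,
      o (D * b - b * D) = -(D * o b - o b * D) := by
    intro b
    rw [map_sub, hmul, hmul, hD]
    noncomm_ring
  have h3 : ∀ (k : ℕ) (a b : Fin k → Matrix (Fin n) (Fin n) ℂ),
      o (∑ i, (D * a i - a i * D) * (D * b i - b i * D))
        = ∑ i, (D * o (b i) - o (b i) * D) * (D * o (a i) - o (a i) * D) := by
    intro k a b
    rw [map_sum]
    refine Finset.sum_congr rfl fun i _ => ?_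
    rw [hmul, h1, h1]
    noncomm_ring
  refine ⟨h1, ?_, h3, ?_⟩
  · intro k a b
    rw [map_sum]
    refine Finset.sum_congr rfl fun i _ => ?_
    rw [hmul, h1]
    noncomm_ring
  · intro k a b
    have hω2 : o ((∑ i, a i * (D * b i - b i * D)) ^ 2)
        = (o (∑ i, a i * (D * b i - b i * D))) ^ 2 := by
      rw [sq, sq, hmul]
    rw [map_add, hω2, ← h3 k a b]
    noncomm_ring
end
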